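/- Span lower bound at saturation (the other half of property 2 in the proof of Theorem 1). In every reachable saturated configuration of the bucketing system, every unrevealed collection A satisfies Min(A) ≥ 1 and Max(A) + 1 ≥ Min(A) + |A|, i.e., Span(A) ≥ |A| − 1; in particular buckets(A) contains at least |A| buckets. -/
import Mathlib


/-- An allegation: a distinct identifier, a metadata value, and a reveal threshold. -/
structure Allegation where
  id : ℕ
  md : ℕ
  thr : ℕ
deriving DecidableEq

/-- A collection: a finite set of allegations, a finite set of occupied buckets,
and a flag indicating whether the collection has been revealed. -/
structure Collection where
  allegs : Finset Allegation
  buckets : Finset ℕ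
  revealed : Bool
deriving DecidableEq

namespace Collection
/-- `Min(A)`: the least occupied bucket. -/
noncomputable def bmin (A : Collection) : ℕ := sInf (A.buckets : Set ℕ)
/-- `Max(A)`: the greatest occupied bucket. -/
noncomputable def bmax (A : Collection) : ℕ := sSup (A.buckets : Set ℕ)
end Collection

/-- A configuration is a finite set of collections. -/
abbrev Config := Finset Collection

/-- The transition rules R1–R5 of the bucketing algorithm. -/
inductive Step : Config → Config → Prop
  /-- R1 (file): a new allegation `a` (with a fresh identifier and threshold `≥ 2`)
  is added as a fresh unrevealed singleton collection with bucket set `{t_a - 1}`. -/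
  | file (C : Config) (a : Allegation)
      (hthr : 2 ≤ a.thr)
      (hfresh : ∀ B ∈ C, ∀ b ∈ B.allegs, b.id ≠ a.id) :
      Step C (insert ⟨{a}, {a.thr - 1}, false⟩ C)
  /-- R2 (copy): if `A` is unrevealed, `Min(A) ≥ 1` and every `a ∈ A` has
  `t_a < Min(A) + |A|`, then `Min(A) - 1` is added to `buckets(A)`. -/
  | copy (C : Config) (A : Collection) (hA : A ∈ C)
      (hrev : A.revealed = false)
      (hmin : 1 ≤ A.bmin)
      (hthr : ∀ a ∈ A.allegs, a.thr < A.bmin + A.allegs.card) :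
      Step C (insert ⟨A.allegs, insert (A.bmin - 1) A.buckets, false⟩ (C.erase A))
  /-- R3 (coalesce): two distinct unrevealed collections with overlapping bucket
  sets and pairwise matching allegations coalesce. -/
  | coalesce (C : Config) (A B : Collection)
      (hA : A ∈ C) (hB : B ∈ C) (hne : A ≠ B)
      (hArev : A.revealed = false) (hBrev : B.revealed = false)
      (hover : (A.buckets ∩ B.buckets).Nonempty)
      (hmatch : ∀ a ∈ A.allegs, ∀ b ∈ B.allegs, a.md = b.md) :
      Step C (insert ⟨A.allegs ∪ B.allegs, A.buckets ∪ B.buckets, false⟩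
        ((C.erase A).erase B))
  /-- R4 (reveal): an unrevealed collection occupying bucket 0 is marked revealed;
  its bucket set becomes `{0, 1, …, |A|}`. -/
  | reveal (C : Config) (A : Collection) (hA : A ∈ C)
      (hrev : A.revealed = false) (h0 : (0 : ℕ) ∈ A.buckets) :
      Step C (insert ⟨A.allegs, Finset.range (A.allegs.card + 1), true⟩ (C.erase A))
  /-- R5 (absorb): a revealed collection absorbs an unrevealed one with overlapping
  bucket set and matching allegations; the result is revealed with bucket set
  `{0, 1, …, |A ∪ B|}`. -/
  | absorb (C : Config) (A B : Collection)
      (hA : A ∈ C) (hB : B ∈ C)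
      (hArev : A.revealed = true) (hBrev : B.revealed = false)
      (hover : (A.buckets ∩ B.buckets).Nonempty)
      (hmatch : ∀ a ∈ A.allegs, ∀ b ∈ B.allegs, a.md = b.md) :
      Step C (insert ⟨A.allegs ∪ B.allegs,
        Finset.range ((A.allegs ∪ B.allegs).card + 1), true⟩
        ((C.erase A).erase B))

/-- A configuration is reachable if it is obtained from the empty configuration
by finitely many applications of R1–R5. -/
def Reachable (C : Config) : Prop := Relation.ReflTransGen Step ∅ C

/-- A configuration is saturated if none of the rules R2–R5 is applicable. -/
def Saturated (C : Config) : Prop :=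
  (¬ ∃ A ∈ C, A.revealed = false ∧ 1 ≤ A.bmin ∧
      ∀ a ∈ A.allegs, a.thr < A.bmin + A.allegs.card) ∧
  (¬ ∃ A ∈ C, ∃ B ∈ C, A ≠ B ∧ A.revealed = false ∧ B.revealed = false ∧
      (A.buckets ∩ B.buckets).Nonempty ∧
      ∀ a ∈ A.allegs, ∀ b ∈ B.allegs, a.md = b.md) ∧
  (¬ ∃ A ∈ C, A.revealed = false ∧ (0 : ℕ) ∈ A.buckets) ∧
  (¬ ∃ A ∈ C, ∃ B ∈ C, A.revealed = true ∧ B.revealed = false ∧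
      (A.buckets ∩ B.buckets).Nonempty ∧
      ∀ a ∈ A.allegs, ∀ b ∈ B.allegs, a.md = b.md)

/-- The set of all allegations filed so far (the union of all collections). -/
def filedAllegs (C : Config) : Finset Allegation := C.sup Collection.allegs

/-- Invariant for a single collection: buckets form a nonempty interval
`[bmin, bmax]`, and for unrevealed collections every threshold is `≤ bmax + 1`. -/
def GoodC (A : Collection) : Prop :=
  A.buckets.Nonempty ∧ A.buckets = Finset.Icc A.bmin A.bmax ∧
    (A.revealed = false → ∀ a ∈ A.allegs, a.thr ≤ A.bmax + 1)

def ConfigInv (C : Config) : Prop := ∀ A ∈ C, GoodC A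

lemma goodC_of (A : Collection) (m M : ℕ)
    (hb : A.buckets = Finset.Icc m M) (hmM : m ≤ M)
    (hthr : A.revealed = false → ∀ a ∈ A.allegs, a.thr ≤ M + 1) : GoodC A := by
  have hmem : ∀ x : ℕ, x ∈ A.buckets ↔ m ≤ x ∧ x ≤ M := fun x => by
    rw [hb, Finset.mem_Icc]
  have hne : A.buckets.Nonempty := ⟨m, (hmem m).2 ⟨le_refl m, hmM⟩⟩
  have hnes : (A.buckets : Set ℕ).Nonempty := by exact_mod_cast hne
  have hmin : A.bmin = m := by
    apply le_antisymm
    · exact csInf_le (OrderBot.bddBelow _)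
        (Finset.mem_coe.2 ((hmem m).2 ⟨le_refl m, hmM⟩))
    · exact le_csInf hnes fun x hx => ((hmem x).1 (Finset.mem_coe.1 hx)).1
  have hmax : A.bmax = M := by
    apply le_antisymm
    · exact csSup_le hnes fun x hx => ((hmem x).1 (Finset.mem_coe.1 hx)).2
    · exact le_csSup (A.buckets.finite_toSet.bddAbove)
        (Finset.mem_coe.2 ((hmem M).2 ⟨hmM, le_refl M⟩))
  exact ⟨hne, by rw [hb, hmin, hmax], by rw [hmax]; exact hthr⟩

lemma inv_step {C C' : Config} (hinv : ConfigInv C) (hstep : Step C C') : ConfigInv C' := by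
  cases hstep with
  | file a hthr hfresh =>
      intro X hX
      rcases Finset.mem_insert.1 hX with rfl | hX
      · refine goodC_of _ (a.thr - 1) (a.thr - 1) (by simp) (le_refl _) ?_
        intro _ b hb
        simp only [Finset.mem_singleton] at hb
        subst hb; omega
      · exact hinv X hX
  | copy A hA hrev hmin hthrA =>
      intro X hX
      rcases Finset.mem_insert.1 hX with rfl | hX
      · obtain ⟨hne, hicc, hthr⟩ := hinv A hA
        have hle : A.bmin ≤ A.bmax := by
          rw [hicc] at hne; exact Finset.nonempty_Icc.1 hne
        refine goodC_of _ (A.bmin - 1) A.bmax ?_ (by omega) ?_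
        · show insert (A.bmin - 1) A.buckets = _
          rw [hicc]
          ext x
          simp only [Finset.mem_insert, Finset.mem_Icc]
          omega
        · intro _ a ha; exact hthr hrev a ha
      · exact hinv X (Finset.mem_of_mem_erase hX)
  | coalesce A B hA hB hne' hArev hBrev hover hmatch =>
      intro X hX
      rcases Finset.mem_insert.1 hX with rfl | hX
      · obtain ⟨hneA, hiccA, hthrA⟩ := hinv A hA
        obtain ⟨hneB, hiccB, hthrB⟩ := hinv B hB
        obtain ⟨c, hc⟩ := hover
        rw [Finset.mem_inter, hiccA, hiccB, Finset.mem_Icc, Finset.mem_Icc] at hc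
        refine goodC_of _ (min A.bmin B.bmin) (max A.bmax B.bmax) ?_ (by omega) ?_
        · show A.buckets ∪ B.buckets = _
          rw [hiccA, hiccB]
          ext x
          simp only [Finset.mem_union, Finset.mem_Icc]
          omega
        · intro _ a ha
          rcases Finset.mem_union.1 ha with h | h
          · exact le_trans (hthrA hArev a h) (by omega)
          · exact le_trans (hthrB hBrev a h) (by omega)
      · exact hinv X (Finset.mem_of_mem_erase (Finset.mem_of_mem_erase hX))
  | reveal A hA hrev h0 =>
      intro X hX
      rcases Finset.mem_insert.1 hX with rfl | hX
      · refine goodC_of _ 0 A.allegs.card ?_ (Nat.zero_le _) ?_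
        · show Finset.range (A.allegs.card + 1) = _
          ext x
          simp only [Finset.mem_range, Finset.mem_Icc]
          omega
        · intro h; simp at h
      · exact hinv X (Finset.mem_of_mem_erase hX)
  | absorb A B hA hB hArev hBrev hover hmatch =>
      intro X hX
      rcases Finset.mem_insert.1 hX with rfl | hX
      · refine goodC_of _ 0 ((A.allegs ∪ B.allegs).card) ?_ (Nat.zero_le _) ?_
        · show Finset.range _ = _
          ext x
          simp only [Finset.mem_range, Finset.mem_Icc]
          omega
        · intro h; simp at h
      · exact hinv X (Finset.mem_of_mem_erase (Finset.mem_of_mem_erase hX))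

lemma inv_reachable {C : Config} (h : Reachable C) : ConfigInv C := by
  induction h with
  | refl => intro A hA; simp at hA
  | tail _ hstep ih => exact inv_step ih hstep

/-- **Span lower bound at saturation.** In every reachable saturated
configuration, every unrevealed collection `A` satisfies `Min(A) ≥ 1` and
`Max(A) + 1 ≥ Min(A) + |A|` (i.e. `Span(A) ≥ |A| - 1`); in particular
`buckets(A)` contains at least `|A|` buckets. -/
theorem bucketing_span_lower_bound (C : Config) (hreach : Reachable C)
    (hsat : Saturated C) :
    ∀ A ∈ C, A.revealed = false →
      1 ≤ A.bmin ∧ A.bmin + A.allegs.card ≤ A.bmax + 1 ∧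
      A.allegs.card ≤ A.buckets.card := by
  intro A hA hrev
  obtain ⟨hne, hicc, hthr⟩ := inv_reachable hreach A hA
  have hle : A.bmin ≤ A.bmax := by
    rw [hicc] at hne; exact Finset.nonempty_Icc.1 hne
  obtain ⟨hR2, _, hR4, _⟩ := hsat
  -- Min ≥ 1
  have hmin1 : 1 ≤ A.bmin := by
    by_contra h
    have h0 : A.bmin = 0 := by omega
    exact hR4 ⟨A, hA, hrev, by rw [hicc, Finset.mem_Icc]; omega⟩
  -- ∃ a with large threshold
  have hex : ∃ a ∈ A.allegs, A.bmin + A.allegs.card ≤ a.thr := by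
    by_contra h
    push_neg at h
    exact hR2 ⟨A, hA, hrev, hmin1, fun a ha => h a ha⟩
  obtain ⟨a, ha, hathr⟩ := hex
  have hup : a.thr ≤ A.bmax + 1 := hthr hrev a ha
  have hspan : A.bmin + A.allegs.card ≤ A.bmax + 1 := le_trans hathr hup
  refine ⟨hmin1, hspan, ?_⟩
  have hcard : A.buckets.card = A.bmax + 1 - A.bmin := by
    rw [hicc, Nat.card_Icc]
  omega
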